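/- Let q ∈ Δ_n and let (p_m)_{m≥1} be a sequence in [0,∞)^n such that ψ(p_m) converges to ψ(q) in ℝ^n. If j ∈ {1,…,n} is an index such that ψ(q)_k ≠ 0 for every k > j, then the sequence of j-th coordinates (p_m)_j converges to q_j. -/
import Mathlib


/-- `Delta n` is the set `Δ_n = {w ∈ ℝ^n : 0 ≤ w_1 ≤ w_2 ≤ ⋯ ≤ w_n ≤ 1}`. -/
def Delta (n : ℕ) : Set (Fin n → ℝ) :=
  {w | Monotone w ∧ ∀ j, 0 ≤ w j ∧ w j ≤ 1}

/-- The monomial map `ψ : ℝ^n → ℝ^n`, `ψ(w)_i = ∏_{j=1}^n w_j^{b_{ij}}`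
(with the convention `0^0 = 1`, automatic for natural-number powers). -/
def psi {n : ℕ} (b : Fin n → Fin n → ℕ) (w : Fin n → ℝ) : Fin n → ℝ :=
  fun i => ∏ j, w j ^ b i j

/-- If `a m ^ k → c ^ k` with everything nonnegative and `k > 0`, then `a m → c`. -/
lemma tendsto_of_pow_tendsto {k : ℕ} (hk : 0 < k) {a : ℕ → ℝ} (ha : ∀ m, 0 ≤ a m)
    {c : ℝ} (hc : 0 ≤ c)
    (h : Filter.Tendsto (fun m => a m ^ k) Filter.atTop (nhds (c ^ k))) :
    Filter.Tendsto a Filter.atTop (nhds c) := by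
  have hcont : ContinuousAt (fun x : ℝ => x ^ (1 / (k : ℝ))) (c ^ k) :=
    Real.continuousAt_rpow_const _ _ (Or.inr (by positivity))
  have h2 := hcont.tendsto.comp h
  have key : ∀ x : ℝ, 0 ≤ x → ((x ^ k : ℝ) ^ (1 / (k : ℝ))) = x := by
    intro x hx
    rw [← Real.rpow_natCast x k, ← Real.rpow_mul hx, mul_one_div,
      div_self (by exact_mod_cast hk.ne'), Real.rpow_one]
  rw [key c hc] at h2
  exact h2.congr fun m => key _ (ha m)

/-- if `q ∈ Δ_n`, `(p_m)` is a sequence in `[0,∞)^n` with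
`ψ(p_m) → ψ(q)`, and `j` is an index such that `ψ(q)_k ≠ 0` for all `k > j`,
then `(p_m)_j → q_j`. -/
theorem stmt_7 (n : ℕ) (hn : 1 ≤ n) (b : Fin n → Fin n → ℕ)
    (hdiag : ∀ i, 0 < b i i) (htri : ∀ i j : Fin n, j < i → b i j = 0)
    (q : Fin n → ℝ) (hq : q ∈ Delta n)
    (p : ℕ → Fin n → ℝ) (hp : ∀ m i, 0 ≤ p m i)
    (hconv : Filter.Tendsto (fun m => psi b (p m)) Filter.atTop (nhds (psi b q)))
    (j : Fin n) (hne : ∀ k : Fin n, j < k → psi b q k ≠ 0) :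
    Filter.Tendsto (fun m => p m j) Filter.atTop (nhds (q j)) := by
  obtain ⟨hmono, hbound⟩ := hq
  have hqnn : ∀ l, 0 ≤ q l := fun l => (hbound l).1
  have hqpos : ∀ l : Fin n, j < l → 0 < q l := by
    intro l hl
    rcases (hqnn l).lt_or_eq with h | h
    · exact h
    · exact absurd (Finset.prod_eq_zero (Finset.mem_univ l)
        (by rw [← h]; exact zero_pow (hdiag l).ne')) (hne l hl)
  have split : ∀ (w : Fin n → ℝ) (i : Fin n),
      psi b w i = w i ^ b i i * ∏ l ∈ Finset.Ioi i, w l ^ b i l := by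
    intro w i
    have h1 : psi b w i = ∏ l ∈ Finset.Ici i, w l ^ b i l := by
      unfold psi
      refine (Finset.prod_subset (Finset.subset_univ _) ?_).symm
      intro x _ hx
      have hxi : x < i := by simpa [Finset.mem_Ici, not_le] using hx
      rw [htri i x hxi, pow_zero]
    rw [h1, Finset.Ici_eq_cons_Ioi, Finset.prod_cons]
  have key : ∀ d : ℕ, ∀ i : Fin n, j ≤ i → n - (i : ℕ) ≤ d →
      Filter.Tendsto (fun m => p m i) Filter.atTop (nhds (q i)) := by
    intro d
    induction d with
    | zero => intro i _ h0; exact absurd i.isLt (by omega)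
    | succ d ih =>
      intro i hji _hd
      have hR : Filter.Tendsto (fun m => ∏ l ∈ Finset.Ioi i, p m l ^ b i l)
          Filter.atTop (nhds (∏ l ∈ Finset.Ioi i, q l ^ b i l)) := by
        apply tendsto_finset_prod
        intro l hl
        have hl' : i < l := Finset.mem_Ioi.mp hl
        have hll : (i : ℕ) < (l : ℕ) := hl'
        exact (ih l (hji.trans hl'.le) (by omega)).pow _
      have hRpos : 0 < ∏ l ∈ Finset.Ioi i, q l ^ b i l := by
        apply Finset.prod_pos
        intro l hl
        exact pow_pos (hqpos l (lt_of_le_of_lt hji (Finset.mem_Ioi.mp hl))) _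
      have hψi : Filter.Tendsto (fun m => psi b (p m) i) Filter.atTop
          (nhds (psi b q i)) := tendsto_pi_nhds.1 hconv i
      have hdiv := hψi.div hR hRpos.ne'
      have hRne : ∀ᶠ m in Filter.atTop,
          (∏ l ∈ Finset.Ioi i, p m l ^ b i l) ≠ 0 := hR.eventually_ne hRpos.ne'
      have heq : (fun m => psi b (p m) i / ∏ l ∈ Finset.Ioi i, p m l ^ b i l)
          =ᶠ[Filter.atTop] fun m => p m i ^ b i i := by
        filter_upwards [hRne] with m hm
        rw [split (p m) i, mul_div_assoc, div_self hm, mul_one]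
      have hlim : Filter.Tendsto (fun m => p m i ^ b i i) Filter.atTop
          (nhds (q i ^ b i i)) := by
        have := hdiv.congr' heq
        rwa [split q i, mul_div_assoc, div_self hRpos.ne', mul_one] at this
      exact tendsto_of_pow_tendsto (hdiag i) (fun m => hp m i) (hqnn i) hlim
  exact key n j le_rfl (by omega)
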